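/- arXiv:1912.08136 — 2 statements merged into one kernel-verified Lean document; each statement's English description precedes it below -/
import Mathlib

section
/- Let f : ℝⁿ → ℝ be differentiable with L-Lipschitz gradient, let x_{i+1} = x_i - η ∇f(x_i) be gradient descent with fixed step size η > 0, and suppose ∇f(x_k) ≠ 0 and ∑_{i=0}^{k-1} ∇f(x_i) ≠ 0, and f(x_0) is the initial value. Define the congruency ν_k = ⟨∇f(x_k), ∑_{i=0}^{k-1}∇f(x_i)⟩ / (‖∇f(x_k)‖·‖∑_{i=0}^{k-1}∇f(x_i)‖). Then ν_k ≥ (1/η) · (f(x_0) - f(x_k) - (Lη²/2)‖∑_{i=0}^{k-1}∇f(x_i)‖²) / (‖∇f(x_k)‖·‖∑_{i=0}^{k-1}∇f(x_i)‖). -/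
open scoped RealInnerProductSpace

/-
Along the segment from `x` to `y` the directional derivative of `f` grows at most like `L t ‖y - x‖²`,
which integrates to the quadratic upper bound `f y ≤ f x + ⟪∇f x, y - x⟫ + L/2 ‖y - x‖²`.
Telescoping the iteration gives `x₀ - x_k = η ∑_{i<k} ∇f(x_i)`, so the bound at `x = x_k`, `y = x₀`
reads `η ⟪∇f(x_k), ∑_{i<k} ∇f(x_i)⟫ ≥ f(x₀) - f(x_k) - L η²/2 ‖∑_{i<k} ∇f(x_i)‖²`; now divide.
-/

lemma le_add_deriv_add_half_of_deriv_sub_le {φ φ' : ℝ → ℝ} {C : ℝ}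
    (hφ : ∀ t, HasDerivAt φ (φ' t) t) (hφ' : ∀ t ∈ Set.Ioo (0 : ℝ) 1, φ' t - φ' 0 ≤ C * t) :
    φ 1 ≤ φ 0 + φ' 0 + C / 2 := by
  set g : ℝ → ℝ := fun t => φ t - t * φ' 0 - C * t ^ 2 / 2
  have hg : ∀ t, HasDerivAt g (φ' t - φ' 0 - C * t) t := fun t => by
    refine (((hφ t).sub ((hasDerivAt_id t).mul_const (φ' 0))).sub
      (((hasDerivAt_pow 2 t).const_mul C).div_const 2)).congr_deriv ?_
    norm_num
    ring
  have hanti : AntitoneOn g (Set.Icc 0 1) := by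
    refine antitoneOn_of_hasDerivWithinAt_nonpos (convex_Icc 0 1)
      (fun t _ => (hg t).continuousAt.continuousWithinAt) (fun t _ => (hg t).hasDerivWithinAt) ?_
    intro t ht
    rw [interior_Icc] at ht
    linarith [hφ' t ht]
  have := hanti (Set.left_mem_Icc.2 zero_le_one) (Set.right_mem_Icc.2 zero_le_one) zero_le_one
  simp only [g] at this
  linarith

section

variable {F : Type*} [NormedAddCommGroup F] [InnerProductSpace ℝ F] [CompleteSpace F]

lemma hasDerivAt_comp_add_smul_gradient {f : F → ℝ} (hf : Differentiable ℝ f) (x v : F) (t : ℝ) :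
    HasDerivAt (fun t : ℝ => f (x + t • v)) ⟪gradient f (x + t • v), v⟫ t := by
  have hline : HasDerivAt (fun t : ℝ => x + t • v) v t := by
    simpa using ((hasDerivAt_id t).smul_const v).const_add x
  simpa [Function.comp_def] using
    (hasGradientAt_iff_hasFDerivAt.mp (hf _).hasGradientAt).comp_hasDerivAt t hline

lemma le_add_inner_gradient_add_of_lipschitz_gradient {f : F → ℝ} {L : ℝ} {x : F}
    (hf : Differentiable ℝ f) (hlip : ∀ z, ‖gradient f z - gradient f x‖ ≤ L * ‖z - x‖) (y : F) :
    f y ≤ f x + ⟪gradient f x, y - x⟫ + L / 2 * ‖y - x‖ ^ 2 := by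
  have key := le_add_deriv_add_half_of_deriv_sub_le (C := L * ‖y - x‖ ^ 2)
    (hasDerivAt_comp_add_smul_gradient hf x (y - x)) fun t ht => by
      calc ⟪gradient f (x + t • (y - x)), y - x⟫ - ⟪gradient f (x + (0 : ℝ) • (y - x)), y - x⟫
          = ⟪gradient f (x + t • (y - x)) - gradient f x, y - x⟫ := by
            rw [zero_smul, add_zero, inner_sub_left]
        _ ≤ ‖gradient f (x + t • (y - x)) - gradient f x‖ * ‖y - x‖ := real_inner_le_norm _ _
        _ ≤ L * (t * ‖y - x‖) * ‖y - x‖ := by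
            gcongr
            simpa [norm_smul, abs_of_pos ht.1] using hlip (x + t • (y - x))
        _ = L * ‖y - x‖ ^ 2 * t := by ring
  simpa [add_sub_cancel, mul_div_right_comm] using key

end

lemma sub_eq_smul_sum_of_step {E : Type*} [AddCommGroup E] [Module ℝ E] {x d : ℕ → E} {η : ℝ}
    (hstep : ∀ i, x (i + 1) = x i - η • d i) (k : ℕ) :
    x 0 - x k = η • ∑ i ∈ Finset.range k, d i := by
  rw [Finset.smul_sum, ← Finset.sum_range_sub']
  exact Finset.sum_congr rfl fun i _ => by rw [hstep i, sub_sub_cancel]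

theorem congruency_basic_lower_bound_general (n k : ℕ) (f : EuclideanSpace ℝ (Fin n) → ℝ) (L η : ℝ)
    (x : ℕ → EuclideanSpace ℝ (Fin n))
    (hf : Differentiable ℝ f)
    (hlip : ∀ a b, ‖gradient f b - gradient f a‖ ≤ L * ‖b - a‖)
    (hη : 0 < η)
    (hstep : ∀ i, x (i + 1) = x i - η • gradient f (x i)) :
    ⟪gradient f (x k), ∑ i ∈ Finset.range k, gradient f (x i)⟫ /
        (‖gradient f (x k)‖ * ‖∑ i ∈ Finset.range k, gradient f (x i)‖) ≥
      (1 / η) *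
        ((f (x 0) - f (x k) - L * η ^ 2 / 2 * ‖∑ i ∈ Finset.range k, gradient f (x i)‖ ^ 2) /
          (‖gradient f (x k)‖ * ‖∑ i ∈ Finset.range k, gradient f (x i)‖)) := by
  set S := ∑ i ∈ Finset.range k, gradient f (x i)
  have hdescent := le_add_inner_gradient_add_of_lipschitz_gradient hf (hlip (x k)) (x 0)
  rw [sub_eq_smul_sum_of_step hstep k, real_inner_smul_right, norm_smul, Real.norm_of_nonneg hη.le]
    at hdescent
  have hnum : (1 / η) * (f (x 0) - f (x k) - L * η ^ 2 / 2 * ‖S‖ ^ 2) ≤ ⟪gradient f (x k), S⟫ := by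
    rw [one_div, inv_mul_le_iff₀ hη]
    linarith
  rw [ge_iff_le, ← mul_div_assoc]
  gcongr

theorem congruency_basic_lower_bound (n k : ℕ) (f : EuclideanSpace ℝ (Fin n) → ℝ) (L η : ℝ)
    (x : ℕ → EuclideanSpace ℝ (Fin n))
    (hf : Differentiable ℝ f) (hL : 0 ≤ L)
    (hlip : ∀ a b, ‖gradient f b - gradient f a‖ ≤ L * ‖b - a‖)
    (hη : 0 < η)
    (hstep : ∀ i, x (i + 1) = x i - η • gradient f (x i))
    (hgk : gradient f (x k) ≠ 0)
    (hsum : ∑ i ∈ Finset.range k, gradient f (x i) ≠ 0) :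
    ⟪gradient f (x k), ∑ i ∈ Finset.range k, gradient f (x i)⟫ /
        (‖gradient f (x k)‖ * ‖∑ i ∈ Finset.range k, gradient f (x i)‖) ≥
      (1 / η) *
        ((f (x 0) - f (x k) - L * η ^ 2 / 2 * ‖∑ i ∈ Finset.range k, gradient f (x i)‖ ^ 2) /
          (‖gradient f (x k)‖ * ‖∑ i ∈ Finset.range k, gradient f (x i)‖)) :=
  congruency_basic_lower_bound_general n k f L η x hf hlip hη hstep
end

section
/- If ∇f is L-Lipschitz and the fixed step size satisfies η ≤ 1/L, then along gradient descent the sum of squared gradient norms is bounded: ∑_{i=0}^{k-1} ‖∇f(x_i)‖² ≤ (2/η)(f(x_0) - f(x_k)), and in particular if f is bounded below by f*, then ∑_{i=0}^{∞} ‖∇f(x_i)‖² ≤ (2/η)(f(x_0) - f*). -/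
/-!
On the segment `t ↦ x + t • v` the derivative `⟪∇f (x + t • v), v⟫` of `f` exceeds its value at
`t = 0` by at most `L t ‖v‖²`; integrating gives the descent lemma
`f (x + v) ≤ f x + ⟪∇f x, v⟫ + L/2 ‖v‖²`. For the step `v = -η ∇f x` this is a decrease of at
least `η (1 - Lη/2) ‖∇f x‖² ≥ η/2 ‖∇f x‖²`, since `Lη ≤ 1`. Summing, the decreases telescope
to `f x₀ - f xₖ ≤ f x₀ - f*`, and these uniform bounds on the partial sums of a series with
nonnegative terms bound its sum.
-/

open InnerProductSpace

section LipschitzGradient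

variable {E : Type*} [NormedAddCommGroup E] [InnerProductSpace ℝ E] [CompleteSpace E]
  {f : E → ℝ} {L : ℝ}

theorem hasDerivAt_apply_add_smul (hf : Differentiable ℝ f) (x v : E) (t : ℝ) :
    HasDerivAt (fun s : ℝ => f (x + s • v)) ⟪gradient f (x + t • v), v⟫_ℝ t := by
  have hline : HasDerivAt (fun s : ℝ => x + s • v) v t := by
    simpa using ((hasDerivAt_id t).smul_const v).const_add x
  simpa only [Function.comp_def, inner_gradient_left] using
    (hf (x + t • v)).hasFDerivAt.comp_hasDerivAt t hline

theorem inner_gradient_add_smul_sub_le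
    (hlip : ∀ a b, ‖gradient f b - gradient f a‖ ≤ L * ‖b - a‖) (x v : E) {t : ℝ} (ht : 0 ≤ t) :
    ⟪gradient f (x + t • v), v⟫_ℝ - ⟪gradient f x, v⟫_ℝ ≤ L * t * ‖v‖ ^ 2 := by
  rw [← inner_sub_left]
  calc ⟪gradient f (x + t • v) - gradient f x, v⟫_ℝ
      ≤ ‖gradient f (x + t • v) - gradient f x‖ * ‖v‖ := real_inner_le_norm _ _
    _ ≤ L * ‖(x + t • v) - x‖ * ‖v‖ := by gcongr; exact hlip _ _
    _ = L * t * ‖v‖ ^ 2 := by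
      rw [add_sub_cancel_left, norm_smul, Real.norm_of_nonneg ht]; ring

/-- The descent lemma. -/
theorem le_add_inner_gradient_add_sq (hf : Differentiable ℝ f)
    (hlip : ∀ a b, ‖gradient f b - gradient f a‖ ≤ L * ‖b - a‖) (x v : E) :
    f (x + v) ≤ f x + ⟪gradient f x, v⟫_ℝ + L / 2 * ‖v‖ ^ 2 := by
  have hB (t : ℝ) :
      HasDerivAt (fun s : ℝ => f x + s * ⟪gradient f x, v⟫_ℝ + L / 2 * s ^ 2 * ‖v‖ ^ 2)
        (⟪gradient f x, v⟫_ℝ + L * t * ‖v‖ ^ 2) t := by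
    refine ((((hasDerivAt_id' t).mul_const _).const_add (f x)).add
      (((hasDerivAt_pow 2 t).const_mul (L / 2)).mul_const (‖v‖ ^ 2))).congr_deriv ?_
    push_cast; ring
  have := image_le_of_deriv_right_le_deriv_boundary (a := 0) (b := 1)
    (fun t _ => (hasDerivAt_apply_add_smul hf x v t).continuousAt.continuousWithinAt)
    (fun t _ => (hasDerivAt_apply_add_smul hf x v t).hasDerivWithinAt)
    (by simp) (fun t _ => (hB t).continuousAt.continuousWithinAt)
    (fun t _ => (hB t).hasDerivWithinAt)
    (fun t ht => by linarith [inner_gradient_add_smul_sub_le hlip x v ht.1])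
    (Set.right_mem_Icc.2 zero_le_one)
  simpa using this

theorem le_sub_gradient_step (hf : Differentiable ℝ f)
    (hlip : ∀ a b, ‖gradient f b - gradient f a‖ ≤ L * ‖b - a‖) (x : E) (η : ℝ) :
    f (x - η • gradient f x) ≤ f x - η * (1 - L * η / 2) * ‖gradient f x‖ ^ 2 := by
  have := le_add_inner_gradient_add_sq hf hlip x (-(η • gradient f x))
  rw [← sub_eq_add_neg, inner_neg_right, real_inner_smul_right, real_inner_self_eq_norm_sq,
    norm_neg, norm_smul, mul_pow, Real.norm_eq_abs, sq_abs] at this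
  linarith

theorem half_mul_sq_norm_gradient_le (hf : Differentiable ℝ f)
    (hlip : ∀ a b, ‖gradient f b - gradient f a‖ ≤ L * ‖b - a‖) (x : E) {η : ℝ}
    (hη : 0 ≤ η) (hLη : L * η ≤ 1) :
    η / 2 * ‖gradient f x‖ ^ 2 ≤ f x - f (x - η • gradient f x) := by
  have := le_sub_gradient_step hf hlip x η
  nlinarith [mul_nonneg (mul_nonneg hη (sub_nonneg.2 hLη)) (sq_nonneg ‖gradient f x‖)]

end LipschitzGradient

theorem sum_sq_grad_norm_bounded_general (n : ℕ) (f : EuclideanSpace ℝ (Fin n) → ℝ) (L η : ℝ)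
    (x : ℕ → EuclideanSpace ℝ (Fin n))
    (hf : Differentiable ℝ f)
    (hlip : ∀ a b, ‖gradient f b - gradient f a‖ ≤ L * ‖b - a‖)
    (hη : 0 < η) (hηL : η ≤ 1 / L)
    (hstep : ∀ i, x (i + 1) = x i - η • gradient f (x i)) :
    (∀ k, ∑ i ∈ Finset.range k, ‖gradient f (x i)‖ ^ 2 ≤
      (2 / η) * (f (x 0) - f (x k))) ∧
    ∀ fstar : ℝ, (∀ y, fstar ≤ f y) →
      ∑' i : ℕ, ‖gradient f (x i)‖ ^ 2 ≤ (2 / η) * (f (x 0) - fstar) := by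
  have hL : 0 < L := one_div_pos.1 (hη.trans_le hηL)
  have hLη : L * η ≤ 1 := by rwa [le_div_iff₀ hL, mul_comm] at hηL
  have hsum (k : ℕ) : ∑ i ∈ Finset.range k, ‖gradient f (x i)‖ ^ 2 ≤
      (2 / η) * (f (x 0) - f (x k)) := by
    have htele : η / 2 * ∑ i ∈ Finset.range k, ‖gradient f (x i)‖ ^ 2 ≤ f (x 0) - f (x k) := by
      rw [Finset.mul_sum, ← Finset.sum_range_sub' (fun i => f (x i)) k]
      refine Finset.sum_le_sum fun i _ => ?_
      rw [hstep i]
      exact half_mul_sq_norm_gradient_le hf hlip (x i) hη.le hLη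
    calc ∑ i ∈ Finset.range k, ‖gradient f (x i)‖ ^ 2
        = (2 / η) * (η / 2 * ∑ i ∈ Finset.range k, ‖gradient f (x i)‖ ^ 2) := by field_simp
      _ ≤ (2 / η) * (f (x 0) - f (x k)) := by gcongr
  refine ⟨hsum, fun fstar hfstar =>
    Real.tsum_le_of_sum_range_le (fun i => sq_nonneg _) fun k => ?_⟩
  calc ∑ i ∈ Finset.range k, ‖gradient f (x i)‖ ^ 2 ≤ (2 / η) * (f (x 0) - f (x k)) := hsum k
    _ ≤ (2 / η) * (f (x 0) - fstar) := by gcongr; exact hfstar _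

theorem sum_sq_grad_norm_bounded (n : ℕ) (f : EuclideanSpace ℝ (Fin n) → ℝ) (L η : ℝ)
    (x : ℕ → EuclideanSpace ℝ (Fin n))
    (hf : Differentiable ℝ f) (hL : 0 < L)
    (hlip : ∀ a b, ‖gradient f b - gradient f a‖ ≤ L * ‖b - a‖)
    (hη : 0 < η) (hηL : η ≤ 1 / L)
    (hstep : ∀ i, x (i + 1) = x i - η • gradient f (x i)) :
    (∀ k, ∑ i ∈ Finset.range k, ‖gradient f (x i)‖ ^ 2 ≤
      (2 / η) * (f (x 0) - f (x k))) ∧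
    ∀ fstar : ℝ, (∀ y, fstar ≤ f y) →
      ∑' i : ℕ, ‖gradient f (x i)‖ ^ 2 ≤ (2 / η) * (f (x 0) - fstar) :=
  sum_sq_grad_norm_bounded_general n f L η x hf hlip hη hηL hstep
end
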